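/- A closed subset F of a hypergroup H is strongly normal in H (i.e., h*Fh ⊆ F for all h ∈ H) if and only if the quotient hypergroup H//F is thin. -/

import Mathlib

/-- A hypergroup: a set with a hypermultiplication, identity and involution
satisfying (H1), (H2), (H3). -/
structure Hypergroup (H : Type*) where
  hmul : H → H → Set H
  one : H
  star : H → H
  assoc : ∀ p q r : H, (⋃ x ∈ hmul q r, hmul p x) = ⋃ x ∈ hmul p q, hmul x r
  hmul_one : ∀ s : H, hmul s one = {s}
  inv_left : ∀ p q r : H, r ∈ hmul p q → q ∈ hmul (star p) r
  inv_right : ∀ p q r : H, r ∈ hmul p q → p ∈ hmul r (star q)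

namespace Hypergroup

variable {H : Type*} (G : Hypergroup H)

/-- Complex (set) product: `AB = ⋃_{a ∈ A, b ∈ B} ab`. -/
def smul (A B : Set H) : Set H := ⋃ a ∈ A, ⋃ b ∈ B, G.hmul a b

/-- `A* = { a* | a ∈ A }`. -/
def sstar (A : Set H) : Set H := G.star '' A

/-- A nonempty subset `F` is closed if `F*F ⊆ F`. -/
def IsClosed (F : Set H) : Prop := F.Nonempty ∧ G.smul (G.sstar F) F ⊆ F

/-- `F` is normal in `K`: `Fk ⊆ kF` for all `k ∈ K`. -/
def IsNormalIn (F K : Set H) : Prop := ∀ k ∈ K, G.smul F {k} ⊆ G.smul {k} F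

/-- `F` is strongly normal in `K`: `k*Fk ⊆ F` for all `k ∈ K`. -/
def IsStronglyNormalIn (F K : Set H) : Prop :=
  ∀ k ∈ K, G.smul (G.smul {G.star k} F) {k} ⊆ F

/-- An element `s` is thin if `s*s = {1}`. -/
def IsThinElem (s : H) : Prop := G.hmul (G.star s) s = {G.one}

/-- A hypergroup is thin if all elements are thin. -/
def IsThin : Prop := ∀ s : H, G.IsThinElem s

/-- The center `Z(H) = {h | hx = xh for all x, h*h = {1}}`. -/
def center : Set H :=
  {h | (∀ x : H, G.hmul h x = G.hmul x h) ∧ G.hmul (G.star h) h = {G.one}}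

/-- The class `h^F := FhF`. -/
def cls (F : Set H) (h : H) : Set H := G.smul (G.smul F {h}) F

/-- The quotient set `H//F := { h^F | h ∈ H }`. -/
def quotSet (F : Set H) : Set (Set H) := Set.range (G.cls F)

/-- The class `h^F` as an element of `H//F`. -/
def qcls (F : Set H) (h : H) : G.quotSet F := ⟨G.cls F h, h, rfl⟩

/-- The full preimage in `H` of the center of the quotient `H//T`:
`{h | h^T ∈ Z(H//T)}`, i.e. `h^T` commutes with all classes `y^T` and
`(h^T)*(h^T) = {1^T} = {T}`. -/
def qCenterPre (T : Set H) : Set H :=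
  {h | (∀ y : H, G.cls T '' (G.smul (G.smul {h} T) {y}) =
          G.cls T '' (G.smul (G.smul {y} T) {h})) ∧
       G.cls T '' (G.smul (G.smul {G.star h} T) {h}) = {T}}

/-- The upper central series: `Z₀(H) = {1}`, and `Zᵢ₊₁(H)` is the full preimage
of `Z(H//Zᵢ(H))`, i.e. `Zᵢ₊₁(H)//Zᵢ(H) = Z(H//Zᵢ(H))`. -/
def upperCentral : ℕ → Set H
  | 0 => {G.one}
  | n + 1 => G.qCenterPre (upperCentral n)

/-- A hypergroup is weakly nilpotent if `Zₙ(H) = H` for some `n`. -/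
def WeaklyNilpotent : Prop := ∃ n : ℕ, G.upperCentral n = Set.univ

/-- `F` is subnormal in `K` via a chain of successively normal closed subsets. -/
def IsSubnormalIn (F K : Set H) : Prop :=
  ∃ n : ℕ, ∃ C : ℕ → Set H, C 0 = F ∧ C n = K ∧
    ∀ i < n, C i ⊆ C (i + 1) ∧ G.IsClosed (C (i + 1)) ∧ G.IsNormalIn (C i) (C (i + 1))

/-- The quotient `K//N` is thin: `(k^N)*(k^N) = {1^N}` for all `k ∈ K`. -/
def QuotThin (N K : Set H) : Prop :=
  ∀ k ∈ K, G.cls N '' (G.smul (G.smul {G.star k} N) {k}) = {N}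

/-- A residually-thin chain from `{1}` to `K`. -/
def RTChainOn (K : Set H) (n : ℕ) (C : ℕ → Set H) : Prop :=
  C 0 = {G.one} ∧ C n = K ∧
    ∀ i < n, C i ⊆ C (i + 1) ∧ G.IsClosed (C (i + 1)) ∧ G.QuotThin (C i) (C (i + 1))

/-- The valency `n_K = ∏ |Cᵢ₊₁//Cᵢ|` computed along some RT chain for `K`. -/
def HasValencyOn (K : Set H) (m : ℕ) : Prop :=
  ∃ n C, G.RTChainOn K n C ∧
    m = ∏ i ∈ Finset.range n, Nat.card (G.cls (C i) '' C (i + 1))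

/-- A closed `p`-subset: a closed subset whose valency is a power of `p`. -/
def PSubsetOn (p : ℕ) (K : Set H) : Prop :=
  G.IsClosed K ∧ ∃ m k : ℕ, G.HasValencyOn K m ∧ m = p ^ k

/-- `h` is `p`-valenced in `K`: for every subnormal closed `p`-subset `U` of `K`
such that `(h*)^U h^U` consists of thin elements of the quotient,
`n_{(h*)^U h^U} = |(h*)^U h^U|` is a power of `p`. -/
def PValencedElemOn (p : ℕ) (K : Set H) (h : H) : Prop :=
  ∀ U : Set H, G.IsClosed U → U ⊆ K → G.IsSubnormalIn U K → G.PSubsetOn p U →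
    (∀ x ∈ G.smul (G.smul {G.star h} U) {h},
      G.cls U '' (G.smul (G.smul {G.star x} U) {x}) = {U}) →
    ∃ k : ℕ, Nat.card (G.cls U '' (G.smul (G.smul {G.star h} U) {h})) = p ^ k

/-- `K` is `p`-valenced if all its elements are. -/
def PValencedOn (p : ℕ) (K : Set H) : Prop := ∀ h ∈ K, G.PValencedElemOn p K h

end Hypergroup


/-!
Every class `x^F = FxF` contains `x`, and for closed `F` it equals `F` exactly when `x ∈ F`.
Since `1 ∈ h*Fh`, the set of classes `{x^F | x ∈ h*Fh}` is therefore `{F}` precisely when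
`h*Fh ⊆ F`.
-/

namespace Hypergroup

variable {H : Type*} (G : Hypergroup H)

@[simp]
lemma mem_smul_iff {A B : Set H} {x : H} :
    x ∈ G.smul A B ↔ ∃ a ∈ A, ∃ b ∈ B, x ∈ G.hmul a b := by
  simp [smul]

lemma mem_mul_one (x : H) : x ∈ G.hmul x G.one := by
  simp [G.hmul_one]

lemma one_mem_star_mul (x : H) : G.one ∈ G.hmul (G.star x) x :=
  G.inv_left x G.one x (G.mem_mul_one x)

@[simp]
lemma star_star (x : H) : G.star (G.star x) = x := by
  simpa [G.hmul_one, eq_comm] using G.inv_left (G.star x) x G.one (G.one_mem_star_mul x)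

lemma mem_one_mul (x : H) : x ∈ G.hmul G.one x := by
  simpa using G.inv_right (G.star (G.star x)) (G.star x) G.one (G.one_mem_star_mul (G.star x))

variable {G} {F : Set H}

lemma IsClosed.one_mem (hF : G.IsClosed F) : G.one ∈ F := by
  obtain ⟨f, hf⟩ := hF.1
  exact hF.2 <| (G.mem_smul_iff).2 ⟨G.star f, ⟨f, hf, rfl⟩, f, hf, G.one_mem_star_mul f⟩

lemma IsClosed.star_mem (hF : G.IsClosed F) {a : H} (ha : a ∈ F) : G.star a ∈ F :=
  hF.2 <| (G.mem_smul_iff).2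
    ⟨G.star a, ⟨a, ha, rfl⟩, G.one, hF.one_mem, G.mem_mul_one _⟩

lemma IsClosed.mul_subset (hF : G.IsClosed F) {a b : H} (ha : a ∈ F) (hb : b ∈ F) :
    G.hmul a b ⊆ F := fun x hx =>
  hF.2 <| (G.mem_smul_iff).2
    ⟨G.star (G.star a), ⟨G.star a, hF.star_mem ha, rfl⟩, b, hb, by rwa [G.star_star]⟩

lemma IsClosed.mem_cls_self (hF : G.IsClosed F) (x : H) : x ∈ G.cls F x := by
  simp only [cls, mem_smul_iff, Set.mem_singleton_iff, exists_eq_left]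
  exact ⟨x, ⟨G.one, hF.one_mem, G.mem_one_mul x⟩, G.one, hF.one_mem, G.mem_mul_one x⟩

lemma IsClosed.cls_subset_of_mem (hF : G.IsClosed F) {x : H} (hx : x ∈ F) :
    G.cls F x ⊆ F := by
  intro z hz
  simp only [cls, mem_smul_iff, Set.mem_singleton_iff, exists_eq_left] at hz
  obtain ⟨a, ⟨f, hf, ha⟩, g, hg, hz⟩ := hz
  exact hF.mul_subset (hF.mul_subset hf hx ha) hg hz

lemma IsClosed.subset_cls_of_mem (hF : G.IsClosed F) {x : H} (hx : x ∈ F) :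
    F ⊆ G.cls F x := by
  intro f hf
  -- `f ∈ f·1 ⊆ f(x*x) = (fx*)x`, and the element of `fx*` involved lies in `F`.
  have hf_assoc : f ∈ ⋃ y ∈ G.hmul (G.star x) x, G.hmul f y :=
    Set.mem_biUnion (G.one_mem_star_mul x) (G.mem_mul_one f)
  rw [G.assoc] at hf_assoc
  obtain ⟨y, hy, hfy⟩ := Set.mem_iUnion₂.1 hf_assoc
  simp only [cls, mem_smul_iff, Set.mem_singleton_iff, exists_eq_left]
  exact ⟨f, ⟨y, hF.mul_subset hf (hF.star_mem hx) hy, hfy⟩, G.one, hF.one_mem, G.mem_mul_one f⟩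

lemma IsClosed.cls_eq_self_iff (hF : G.IsClosed F) {x : H} : G.cls F x = F ↔ x ∈ F :=
  ⟨fun h => h ▸ hF.mem_cls_self x,
    fun hx => (hF.cls_subset_of_mem hx).antisymm (hF.subset_cls_of_mem hx)⟩

lemma IsClosed.cls_image_eq_singleton_iff (hF : G.IsClosed F) {S : Set H} (hS : S.Nonempty) :
    G.cls F '' S = {F} ↔ S ⊆ F := by
  simp only [Set.eq_singleton_iff_nonempty_unique_mem, hS.image, true_and,
    Set.forall_mem_image, hF.cls_eq_self_iff, Set.subset_def]

lemma IsClosed.one_mem_star_smul_smul (hF : G.IsClosed F) (h : H) :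
    G.one ∈ G.smul (G.smul {G.star h} F) {h} := by
  simp only [mem_smul_iff, Set.mem_singleton_iff, exists_eq_left]
  exact ⟨G.star h, ⟨G.one, hF.one_mem, G.mem_mul_one _⟩, G.one_mem_star_mul h⟩

end Hypergroup

/-- a closed subset `F` is strongly normal in `H` iff the
quotient `H//F` is thin, i.e. `(h^F)*(h^F) = {x^F | x ∈ h*Fh} = {1^F} = {F}`
for every `h ∈ H`. -/
theorem stronglyNormal_iff_quot_thin {H : Type*} (G : Hypergroup H) (F : Set H)
    (hF : G.IsClosed F) :
    G.IsStronglyNormalIn F Set.univ ↔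
      ∀ h : H, G.cls F '' (G.smul (G.smul {G.star h} F) {h}) = {F} := by
  simp only [Hypergroup.IsStronglyNormalIn, Set.mem_univ, true_implies,
    hF.cls_image_eq_singleton_iff ⟨_, hF.one_mem_star_smul_smul _⟩]
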